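/- Let C > 0, α_1, α_2 > 0, β_1, β_2 > 1, ν_1, ν_2 > 0 and p ≥ 1. There exists a constant c > 0 such that for all r, t > 0: ∑_{k=1}^∞ exp( −C t σ_{β_2/(β_2−1), β_1/(β_1−1)}(2^{−k} r / t) ) · σ_{ν_1β_1, ν_2β_2}(2^{1−k} r)^p · σ_{α_1,α_2}(2^{1−k} r) ≤ c · σ_{α_1/β_1, α_2/β_2}(t) · σ_{ν_1,ν_2}(t)^p. -/

import Mathlib

open Set Real

/-- The function `σ_{a,b}(r) = r^a` for `0 ≤ r ≤ 1` and `r^b` for `r > 1`. -/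
noncomputable def sg (a b r : ℝ) : ℝ := if r ≤ 1 then r ^ a else r ^ b

set_option maxHeartbeats 1000000

lemma sg_pos (a b : ℝ) {r : ℝ} (hr : 0 < r) : 0 < sg a b r := by
  unfold sg; split <;> exact Real.rpow_pos_of_pos hr _

lemma sg_smul_le_min {a b l x : ℝ} (hl0 : 0 < l) (hl : l ≤ 1) (hx : 0 < x) :
    sg a b (l * x) ≤ l ^ min a b * sg a b x := by
  have hlx : 0 < l * x := mul_pos hl0 hx
  have hlxx : l * x ≤ x := by nlinarith
  unfold sg
  rcases le_or_gt x 1 with hx1 | hx1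
  · rw [if_pos (hlxx.trans hx1), if_pos hx1, Real.mul_rpow hl0.le hx.le]
    exact mul_le_mul_of_nonneg_right
      (Real.rpow_le_rpow_of_exponent_ge hl0 hl (min_le_left a b))
      (Real.rpow_nonneg hx.le a)
  · rw [if_neg (not_le.mpr hx1)]
    rcases le_or_gt (l * x) 1 with hlx1 | hlx1
    · rw [if_pos hlx1]
      calc (l * x) ^ a ≤ (l * x) ^ min a b :=
            Real.rpow_le_rpow_of_exponent_ge hlx hlx1 (min_le_left a b)
        _ = l ^ min a b * x ^ min a b := Real.mul_rpow hl0.le hx.le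
        _ ≤ l ^ min a b * x ^ b := by
            exact mul_le_mul_of_nonneg_left
              (Real.rpow_le_rpow_of_exponent_le hx1.le (min_le_right a b))
              (Real.rpow_nonneg hl0.le _)
    · rw [if_neg (not_le.mpr hlx1), Real.mul_rpow hl0.le hx.le]
      exact mul_le_mul_of_nonneg_right
        (Real.rpow_le_rpow_of_exponent_ge hl0 hl (min_le_right a b))
        (Real.rpow_nonneg hx.le b)

lemma sg_smul_le_max {a b l x : ℝ} (hl : 1 ≤ l) (hx : 0 < x) :
    sg a b (l * x) ≤ l ^ max a b * sg a b x := by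
  have hl0 : (0:ℝ) < l := lt_of_lt_of_le one_pos hl
  have hlx : 0 < l * x := mul_pos hl0 hx
  have hxlx : x ≤ l * x := by nlinarith
  unfold sg
  rcases le_or_gt (l * x) 1 with hlx1 | hlx1
  · rw [if_pos hlx1, if_pos (hxlx.trans hlx1), Real.mul_rpow hl0.le hx.le]
    exact mul_le_mul_of_nonneg_right
      (Real.rpow_le_rpow_of_exponent_le hl (le_max_left a b))
      (Real.rpow_nonneg hx.le a)
  · rw [if_neg (not_le.mpr hlx1)]
    rcases le_or_gt x 1 with hx1 | hx1
    · rw [if_pos hx1]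
      calc (l * x) ^ b ≤ (l * x) ^ max a b :=
            Real.rpow_le_rpow_of_exponent_le hlx1.le (le_max_right a b)
        _ = l ^ max a b * x ^ max a b := Real.mul_rpow hl0.le hx.le
        _ ≤ l ^ max a b * x ^ a := by
            exact mul_le_mul_of_nonneg_left
              (Real.rpow_le_rpow_of_exponent_ge hx hx1 (le_max_left a b))
              (Real.rpow_nonneg hl0.le _)
    · rw [if_neg (not_le.mpr hx1), Real.mul_rpow hl0.le hx.le]
      exact mul_le_mul_of_nonneg_right
        (Real.rpow_le_rpow_of_exponent_le hl (le_max_right a b))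
        (Real.rpow_nonneg hx.le b)

lemma sg_comp {β₁ β₂ : ℝ} (hβ₁ : 0 < β₁) (hβ₂ : 0 < β₂) (a b : ℝ) {t : ℝ} (ht : 0 < t) :
    sg (a * β₁) (b * β₂) (sg (1/β₁) (1/β₂) t) = sg a b t := by
  unfold sg
  rcases le_or_gt t 1 with ht1 | ht1
  · rw [if_pos ht1]
    have hτ : t ^ (1/β₁) ≤ 1 := Real.rpow_le_one ht.le ht1 (by positivity)
    rw [if_pos hτ, if_pos ht1, ← Real.rpow_mul ht.le]
    congr 1; field_simp
  · rw [if_neg (not_le.mpr ht1)]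
    have hτ : 1 < t ^ (1/β₂) :=
      Real.one_lt_rpow_iff_of_pos ht |>.mpr (Or.inl ⟨ht1, by positivity⟩)
    rw [if_neg (not_le.mpr hτ), if_neg (not_le.mpr ht1), ← Real.rpow_mul ht.le]
    congr 1; field_simp

lemma exp_pow_bound {c₀ γ : ℝ} (hc : 0 < c₀) (hγ : 0 < γ) (A : ℝ) :
    ∃ K > (0:ℝ), ∀ l : ℝ, 1 ≤ l → Real.exp (-(c₀ * l ^ γ)) ≤ K * l ^ (-A) := by
  set n : ℕ := ⌈A / γ⌉₊ + 1 with hn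
  have hn0 : (0:ℝ) < n := by positivity
  refine ⟨((n:ℝ) / c₀) ^ n, by positivity, fun l hl => ?_⟩
  have hl0 : (0:ℝ) < l := lt_of_lt_of_le one_pos hl
  have hx : 0 < c₀ * l ^ γ := by positivity
  set x := c₀ * l ^ γ with hxdef
  have h1 : x / n ≤ Real.exp (x / n) := by
    have := Real.add_one_le_exp (x / n); linarith
  have h2 : (x / n) ^ n ≤ Real.exp x := by
    calc (x / n) ^ n ≤ Real.exp (x / n) ^ n :=
          pow_le_pow_left₀ (by positivity) h1 n
      _ = Real.exp ((n:ℝ) * (x / n)) := (Real.exp_nat_mul _ n).symm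
      _ = Real.exp x := by rw [mul_div_cancel₀]; exact ne_of_gt hn0
  have hAn : A ≤ γ * n := by
    have : A / γ ≤ (n:ℝ) := le_trans (Nat.le_ceil _) (by exact_mod_cast Nat.le_succ _)
    calc A = γ * (A / γ) := by field_simp
      _ ≤ γ * n := by nlinarith
  have hlA : l ^ A ≤ (l ^ γ) ^ n := by
    have : (l ^ γ) ^ n = l ^ (γ * n) := by
      rw [Real.rpow_mul hl0.le, Real.rpow_natCast]
    rw [this]
    exact Real.rpow_le_rpow_of_exponent_le hl hAn
  have hkey : (c₀ / n) ^ n * l ^ A ≤ Real.exp x := by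
    calc (c₀ / n) ^ n * l ^ A ≤ (c₀ / n) ^ n * (l ^ γ) ^ n := by
          exact mul_le_mul_of_nonneg_left hlA (by positivity)
      _ = (x / n) ^ n := by rw [← mul_pow, hxdef]; ring_nf
      _ ≤ Real.exp x := h2
  rw [Real.exp_neg, Real.rpow_neg hl0.le]
  calc (Real.exp x)⁻¹ ≤ ((c₀ / n) ^ n * l ^ A)⁻¹ :=
        inv_anti₀ (by positivity) hkey
    _ = ((n:ℝ) / c₀) ^ n * (l ^ A)⁻¹ := by
        rw [mul_inv, ← inv_pow, inv_div]

-- helper: 2^(-c) * l^g ≤ (l/2)^b when 1 ≤ l, 0 ≤ g ≤ b ≤ c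
lemma aux_half {l g b c : ℝ} (hl : 1 ≤ l) (hg : 0 ≤ g) (hgb : g ≤ b) (hbc : b ≤ c) :
    (2:ℝ) ^ (-c) * l ^ g ≤ (l / 2) ^ b := by
  have hl0 : (0:ℝ) < l := lt_of_lt_of_le one_pos hl
  have h1 : (l / 2 : ℝ) ^ b = l ^ b * (2:ℝ) ^ (-b) := by
    rw [div_eq_mul_inv, Real.mul_rpow hl0.le (by norm_num),
      Real.inv_rpow (by norm_num), ← Real.rpow_neg (by norm_num)]
  rw [h1, mul_comm (l ^ b) _]
  exact mul_le_mul (Real.rpow_le_rpow_of_exponent_le one_le_two (by linarith))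
    (Real.rpow_le_rpow_of_exponent_le hl hgb) (Real.rpow_nonneg hl0.le g)
    (Real.rpow_nonneg (by norm_num) _)

lemma crit_low {β₁ β₂ : ℝ} (hβ₁ : 1 < β₁) (hβ₂ : 1 < β₂) {t l : ℝ} (ht : 0 < t) (hl : 1 ≤ l) :
    (2:ℝ) ^ (-(β₁/(β₁-1) + β₂/(β₂-1))) * l ^ min (β₁/(β₁-1)) (β₂/(β₂-1))
      ≤ t * sg (β₂/(β₂-1)) (β₁/(β₁-1)) (l * sg (1/β₁) (1/β₂) t / (2*t)) := by
  have hβ₁0 : (0:ℝ) < β₁ := by linarith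
  have hβ₂0 : (0:ℝ) < β₂ := by linarith
  have hβ₁1 : (0:ℝ) < β₁ - 1 := by linarith
  have hβ₂1 : (0:ℝ) < β₂ - 1 := by linarith
  set b₁ := β₁/(β₁-1) with hb₁def
  set b₂ := β₂/(β₂-1) with hb₂def
  have hb₁ : 1 < b₁ := by rw [hb₁def, lt_div_iff₀ hβ₁1]; linarith
  have hb₂ : 1 < b₂ := by rw [hb₂def, lt_div_iff₀ hβ₂1]; linarith
  have hb₁0 : (0:ℝ) < b₁ := by linarith
  have hb₂0 : (0:ℝ) < b₂ := by linarith
  have hγ1 : 0 ≤ min b₁ b₂ := le_min hb₁0.le hb₂0.le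
  have hl0 : (0:ℝ) < l := lt_of_lt_of_le one_pos hl
  have e₁ : (1/β₁ - 1) * b₁ = -1 := by rw [hb₁def]; field_simp; ring
  have e₂ : (1/β₂ - 1) * b₂ = -1 := by rw [hb₂def]; field_simp; ring
  have e₁' : (1 - 1/β₁) * b₁ = 1 := by rw [hb₁def]; field_simp
  have e₂b : (1/β₂ - 1) = -(1/b₂) := by rw [hb₂def]; field_simp; ring
  unfold sg
  rcases le_or_gt t 1 with ht1 | ht1
  · -- τ = t^(1/β₁)
    rw [if_pos ht1]
    have hu : l * t ^ (1/β₁) / (2*t) = (l/2) * t ^ (1/β₁ - 1) := by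
      rw [Real.rpow_sub ht, Real.rpow_one]; field_simp
    rw [hu]
    have htpow : (1:ℝ) ≤ t ^ (1/β₁ - 1) := by
      apply Real.one_le_rpow_of_pos_of_le_one_of_nonpos ht ht1
      have : 1/β₁ ≤ 1 := by rw [div_le_one hβ₁0]; linarith
      linarith
    have hu0 : 0 < (l/2) * t ^ (1/β₁ - 1) := by positivity
    rcases le_or_gt ((l/2) * t ^ (1/β₁ - 1)) 1 with hu1 | hu1
    · -- u ≤ 1 : t * u^b₂ ≥ (l/2)^b₁ * 2^(-b₂)
      rw [if_pos hu1]
      have hhalf : (1/2 : ℝ) ≤ (l/2) * t ^ (1/β₁ - 1) := by nlinarith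
      have hub : (2:ℝ)^(-b₂) ≤ ((l/2) * t ^ (1/β₁ - 1)) ^ b₂ := by
        have : (2:ℝ)^(-b₂) = (1/2:ℝ) ^ b₂ := by
          rw [Real.rpow_neg (by norm_num), one_div, Real.inv_rpow (by norm_num)]
        rw [this]
        exact Real.rpow_le_rpow (by norm_num) hhalf hb₂0.le
      have hts : (l/2) ^ b₁ ≤ t := by
        have h2 : l/2 ≤ t ^ (1 - 1/β₁) := by
          have h3 : t ^ (1/β₁ - 1) = (t ^ (1 - 1/β₁))⁻¹ := by
            rw [← Real.rpow_neg ht.le]; ring_nf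
          rw [h3] at hu1
          have h4 : 0 < t ^ (1 - 1/β₁) := Real.rpow_pos_of_pos ht _
          have h5 := mul_le_mul_of_nonneg_right hu1 h4.le
          have h6 : l/2 * (t ^ (1 - 1/β₁))⁻¹ * t ^ (1 - 1/β₁) = l/2 := by field_simp
          rw [h6, one_mul] at h5
          exact h5
        calc (l/2) ^ b₁ ≤ (t ^ (1 - 1/β₁)) ^ b₁ :=
              Real.rpow_le_rpow (by positivity) h2 hb₁0.le
          _ = t := by rw [← Real.rpow_mul ht.le, e₁', Real.rpow_one]
      calc (2:ℝ) ^ (-(b₁+b₂)) * l ^ min b₁ b₂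
          = ((2:ℝ) ^ (-b₁) * l ^ min b₁ b₂) * (2:ℝ)^(-b₂) := by
            rw [neg_add, Real.rpow_add two_pos]; ring
        _ ≤ (l/2) ^ b₁ * ((l/2) * t ^ (1/β₁ - 1)) ^ b₂ := by
            exact mul_le_mul (aux_half hl hγ1 (min_le_left _ _) le_rfl) hub
              (by positivity) (by positivity)
        _ ≤ t * ((l/2) * t ^ (1/β₁ - 1)) ^ b₂ := by
            exact mul_le_mul_of_nonneg_right hts (by positivity)
    · -- u > 1 : t * u^b₁ = (l/2)^b₁
      rw [if_neg (not_le.mpr hu1)]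
      have hval : t * ((l/2) * t ^ (1/β₁ - 1)) ^ b₁ = (l/2) ^ b₁ := by
        rw [Real.mul_rpow (by positivity) (Real.rpow_nonneg ht.le _),
          ← Real.rpow_mul ht.le, e₁]
        rw [Real.rpow_neg_one]
        field_simp
      rw [hval]
      exact aux_half hl hγ1 (min_le_left _ _) (by linarith)
  · -- τ = t^(1/β₂)
    rw [if_neg (not_le.mpr ht1)]
    have hu : l * t ^ (1/β₂) / (2*t) = (l/2) * t ^ (1/β₂ - 1) := by
      rw [Real.rpow_sub ht, Real.rpow_one]; field_simp
    rw [hu]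
    rcases le_or_gt ((l/2) * t ^ (1/β₂ - 1)) 1 with hu1 | hu1
    · -- u ≤ 1 : t * u^b₂ = (l/2)^b₂
      rw [if_pos hu1]
      have hval : t * ((l/2) * t ^ (1/β₂ - 1)) ^ b₂ = (l/2) ^ b₂ := by
        rw [Real.mul_rpow (by positivity) (Real.rpow_nonneg ht.le _),
          ← Real.rpow_mul ht.le, e₂]
        rw [Real.rpow_neg_one]
        field_simp
      rw [hval]
      exact aux_half hl hγ1 (min_le_right _ _) (by linarith)
    · -- u > 1 : t * u^b₁ = (l/2)^b₁ * t^(1 - b₁/b₂)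
      rw [if_neg (not_le.mpr hu1)]
      have hval : t * ((l/2) * t ^ (1/β₂ - 1)) ^ b₁
          = (l/2) ^ b₁ * t ^ (1 + (1/β₂ - 1) * b₁) := by
        rw [Real.mul_rpow (by positivity) (Real.rpow_nonneg ht.le _),
          ← Real.rpow_mul ht.le, Real.rpow_add ht, Real.rpow_one]
        ring
      rw [hval]
      rcases le_or_gt b₁ b₂ with hbb | hbb
      · have he : 0 ≤ 1 + (1/β₂ - 1) * b₁ := by
          rw [e₂b]
          have : b₁ / b₂ ≤ 1 := by rw [div_le_one hb₂0]; linarith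
          have hh : (1/b₂) * b₁ = b₁ / b₂ := by ring
          nlinarith
        have h1 : (1:ℝ) ≤ t ^ (1 + (1/β₂ - 1) * b₁) :=
          Real.one_le_rpow ht1.le he
        calc (2:ℝ) ^ (-(b₁+b₂)) * l ^ min b₁ b₂ ≤ (l/2) ^ b₁ :=
              aux_half hl hγ1 (min_le_left _ _) (by linarith)
          _ = (l/2) ^ b₁ * 1 := by ring
          _ ≤ (l/2) ^ b₁ * t ^ (1 + (1/β₂ - 1) * b₁) := by
              exact mul_le_mul_of_nonneg_left h1 (by positivity)
      · -- b₂ < b₁; here l/2 > 1 and t < (l/2)^b₂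
        have hlt : t ^ (1/b₂) < l/2 := by
          have h3 : t ^ (1/β₂ - 1) = (t ^ (1/b₂))⁻¹ := by
            rw [e₂b, Real.rpow_neg ht.le]
          rw [h3] at hu1
          have h4 : 0 < t ^ (1/b₂) := Real.rpow_pos_of_pos ht _
          have h5 := mul_lt_mul_of_pos_right hu1 h4
          have h6 : l/2 * (t ^ (1/b₂))⁻¹ * t ^ (1/b₂) = l/2 := by field_simp
          rw [h6, one_mul] at h5
          exact h5
        have htlt : t < (l/2) ^ b₂ := by
          have := Real.rpow_lt_rpow (Real.rpow_nonneg ht.le _) hlt hb₂0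
          rwa [← Real.rpow_mul ht.le, one_div, inv_mul_cancel₀ (ne_of_gt hb₂0),
            Real.rpow_one] at this
        have hexp : (l/2) ^ (b₂ - b₁) ≤ t ^ (1 + (1/β₂ - 1) * b₁) := by
          have he : 1 + (1/β₂ - 1) * b₁ = (b₂ - b₁) / b₂ := by
            rw [e₂b]; field_simp; ring
          have hneg : (b₂ - b₁) / b₂ ≤ 0 := by
            apply div_nonpos_of_nonpos_of_nonneg <;> linarith
          have := Real.rpow_le_rpow_of_nonpos ht htlt.le hneg
          calc (l/2) ^ (b₂ - b₁) = ((l/2) ^ b₂) ^ ((b₂ - b₁)/b₂) := by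
                rw [← Real.rpow_mul (by positivity)]
                congr 1; field_simp
            _ ≤ t ^ ((b₂ - b₁)/b₂) := this
            _ = t ^ (1 + (1/β₂ - 1) * b₁) := by rw [he]
        calc (2:ℝ) ^ (-(b₁+b₂)) * l ^ min b₁ b₂ ≤ (l/2) ^ b₂ :=
              aux_half hl hγ1 (min_le_right _ _) (by linarith)
          _ = (l/2) ^ b₁ * (l/2) ^ (b₂ - b₁) := by
              rw [← Real.rpow_add (by positivity)]; ring_nf
          _ ≤ (l/2) ^ b₁ * t ^ (1 + (1/β₂ - 1) * b₁) := by
              exact mul_le_mul_of_nonneg_left hexp (by positivity)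

lemma geom_min_sum {q b : ℝ} (hq0 : 0 < q) (hq1 : q < 1) (hb : 0 < b) :
    ∑' j : ℕ, ENNReal.ofReal (min (q ^ j * b) ((q ^ j * b)⁻¹))
      ≤ ENNReal.ofReal (2 / (1 - q)) := by
  have hq1' : (0:ℝ) < 1 - q := by linarith
  have hex : ∃ n : ℕ, q ^ n * b ≤ 1 := by
    obtain ⟨n, hn⟩ := exists_pow_lt_of_lt_one (show (0:ℝ) < 1/b by positivity) hq1
    exact ⟨n, by rw [← le_div_iff₀ hb] at *; linarith⟩
  classical
  obtain ⟨N, hN, hN'⟩ : ∃ N : ℕ, q ^ N * b ≤ 1 ∧ ∀ j < N, 1 < q ^ j * b :=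
    ⟨Nat.find hex, Nat.find_spec hex, fun j hj => lt_of_not_ge (Nat.find_min hex hj)⟩
  -- pointwise bound
  have hbd : ∀ j : ℕ, min (q ^ j * b) ((q ^ j * b)⁻¹)
      ≤ (if j < N then q ^ (N - 1 - j) else q ^ (j - N)) := by
    intro j
    split
    · rename_i hj
      refine le_trans (min_le_right _ _) ?_
      have h1 : 1 ≤ q ^ (N - 1 - j) * (q ^ j * b) := by
        have : q ^ (N - 1 - j) * q ^ j = q ^ (N - 1) := by
          rw [← pow_add]; congr 1; omega
        rw [← mul_assoc, this]
        exact (hN' (N-1) (by omega)).le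
      rw [inv_le_iff_one_le_mul₀ (by positivity)]
      linarith [h1]
    · rename_i hj
      refine le_trans (min_le_left _ _) ?_
      have h1 : q ^ j * b = q ^ (j - N) * (q ^ N * b) := by
        rw [← mul_assoc, ← pow_add]; congr 2; omega
      rw [h1]
      calc q ^ (j - N) * (q ^ N * b) ≤ q ^ (j - N) * 1 :=
            mul_le_mul_of_nonneg_left hN (by positivity)
        _ = q ^ (j - N) := by ring
  calc ∑' j : ℕ, ENNReal.ofReal (min (q ^ j * b) ((q ^ j * b)⁻¹))
      ≤ ∑' j : ℕ, ENNReal.ofReal (if j < N then q ^ (N - 1 - j) else q ^ (j - N)) :=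
        ENNReal.tsum_le_tsum (fun j => ENNReal.ofReal_le_ofReal (hbd j))
    _ = ∑' j : ℕ, ((if j < N then ENNReal.ofReal (q ^ (N - 1 - j)) else 0)
          + (if j < N then 0 else ENNReal.ofReal (q ^ (j - N)))) := by
        apply tsum_congr; intro j; split <;> simp
    _ = (∑' j : ℕ, if j < N then ENNReal.ofReal (q ^ (N - 1 - j)) else 0)
          + ∑' j : ℕ, (if j < N then 0 else ENNReal.ofReal (q ^ (j - N))) :=
        ENNReal.tsum_add
    _ ≤ ENNReal.ofReal (1 / (1 - q)) + ENNReal.ofReal (1 / (1 - q)) := by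
        gcongr
        · -- finite part
          rw [tsum_eq_sum (s := Finset.range N) (by
            intro j hj
            rw [if_neg (by simpa using hj)])]
          have : ∀ j ∈ Finset.range N,
              (if j < N then ENNReal.ofReal (q ^ (N - 1 - j)) else 0)
                = ENNReal.ofReal (q ^ (N - 1 - j)) := by
            intro j hj; rw [if_pos (Finset.mem_range.mp hj)]
          rw [Finset.sum_congr rfl this, ← ENNReal.ofReal_sum_of_nonneg
            (fun j _ => by positivity)]
          apply ENNReal.ofReal_le_ofReal
          have hre : ∑ j ∈ Finset.range N, q ^ (N - 1 - j) = ∑ j ∈ Finset.range N, q ^ j := by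
            rw [← Finset.sum_range_reflect]
            apply Finset.sum_congr rfl
            intro j hj
            have hjN := Finset.mem_range.mp hj
            congr 1
            omega
          rw [hre, geom_sum_eq (ne_of_lt hq1)]
          have hqN : (0:ℝ) ≤ q ^ N := by positivity
          have heq : (q ^ N - 1) / (q - 1) = (1 - q ^ N) / (1 - q) := by
            rw [div_eq_div_iff (by linarith) (by linarith)]; ring
          rw [heq]
          rw [div_le_div_iff_of_pos_right hq1']
          nlinarith
        · -- tail part
          have hinj : Function.Injective (fun i : ℕ => i + N) := fun a b h => by
            simpa using h
          rw [← Function.Injective.tsum_eq hinj (by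
            intro j hj
            simp only [Function.mem_support] at hj
            rcases lt_or_ge j N with h | h
            · rw [if_pos h] at hj; exact absurd rfl hj
            · exact ⟨j - N, by dsimp only; omega⟩)]
          have hterm : ∀ i : ℕ, (if (i + N) < N then (0:ENNReal)
              else ENNReal.ofReal (q ^ ((i + N) - N))) = ENNReal.ofReal q ^ i := by
            intro i
            rw [if_neg (by omega)]
            have h2 : i + N - N = i := by omega
            rw [h2, ENNReal.ofReal_pow hq0.le]
          calc ∑' i : ℕ, (if (i + N) < N then (0:ENNReal)
                else ENNReal.ofReal (q ^ ((i + N) - N)))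
              = ∑' i : ℕ, ENNReal.ofReal q ^ i := tsum_congr hterm
            _ = (1 - ENNReal.ofReal q)⁻¹ := ENNReal.tsum_geometric _
            _ ≤ ENNReal.ofReal (1 / (1 - q)) := by
                rw [← ENNReal.ofReal_one, ← ENNReal.ofReal_sub _ hq0.le,
                  one_div, ← ENNReal.ofReal_inv_of_pos (by linarith)]
    _ = ENNReal.ofReal (2 / (1 - q)) := by
        rw [← ENNReal.ofReal_add (div_nonneg one_pos.le hq1'.le)
          (div_nonneg one_pos.le hq1'.le)]
        congr 1
        ring

lemma pointwise (C α₁ α₂ β₁ β₂ ν₁ ν₂ p : ℝ) (hC : 0 < C) (hα₁ : 0 < α₁) (hα₂ : 0 < α₂)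
    (hβ₁ : 1 < β₁) (hβ₂ : 1 < β₂) (hν₁ : 0 < ν₁) (hν₂ : 0 < ν₂) (hp : 1 ≤ p) :
    ∃ K > (0:ℝ), ∀ t > (0:ℝ), ∀ s > (0:ℝ),
      Real.exp (-(C * (t * sg (β₂/(β₂-1)) (β₁/(β₁-1)) (s / (2*t))))) *
        (sg (ν₁*β₁) (ν₂*β₂) s) ^ p * sg α₁ α₂ s
      ≤ K * (min ((s / sg (1/β₁) (1/β₂) t) ^ min α₁ α₂)
              ((sg (1/β₁) (1/β₂) t / s) ^ min α₁ α₂)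
          * (sg (α₁/β₁) (α₂/β₂) t * (sg ν₁ ν₂ t) ^ p)) := by
  have hβ₁0 : (0:ℝ) < β₁ := by linarith
  have hβ₂0 : (0:ℝ) < β₂ := by linarith
  have hp0 : (0:ℝ) ≤ p := by linarith
  have hε : 0 < min α₁ α₂ := lt_min hα₁ hα₂
  have hb₁0 : (0:ℝ) < β₁/(β₁-1) := div_pos hβ₁0 (by linarith)
  have hb₂0 : (0:ℝ) < β₂/(β₂-1) := div_pos hβ₂0 (by linarith)
  have hγ : (0:ℝ) < min (β₁/(β₁-1)) (β₂/(β₂-1)) := lt_min hb₁0 hb₂0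
  have hm : 0 < min (ν₁*β₁) (ν₂*β₂) := lt_min (by positivity) (by positivity)
  have hc₀ : (0:ℝ) < C * (2:ℝ) ^ (-(β₁/(β₁-1) + β₂/(β₂-1))) := by positivity
  obtain ⟨K₀, hK₀, hKb⟩ := exp_pow_bound hc₀ hγ
    (max (ν₁*β₁) (ν₂*β₂) * p + max α₁ α₂ + min α₁ α₂)
  refine ⟨max K₀ 1, lt_of_lt_of_le one_pos (le_max_right _ _), fun t ht s hs => ?_⟩
  -- abbreviations (generalized to keep terms opaque)
  obtain ⟨τ, hτdef⟩ : ∃ x, x = sg (1/β₁) (1/β₂) t := ⟨_, rfl⟩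
  obtain ⟨Nc, hNcdef⟩ : ∃ x, x = sg ν₁ ν₂ t := ⟨_, rfl⟩
  obtain ⟨Ac, hAcdef⟩ : ∃ x, x = sg (α₁/β₁) (α₂/β₂) t := ⟨_, rfl⟩
  obtain ⟨X, hXdef⟩ : ∃ x, x = sg (ν₁*β₁) (ν₂*β₂) s := ⟨_, rfl⟩
  obtain ⟨Y, hYdef⟩ : ∃ x, x = sg α₁ α₂ s := ⟨_, rfl⟩
  obtain ⟨G, hGdef⟩ : ∃ x, x = sg (β₂/(β₂-1)) (β₁/(β₁-1)) (s / (2*t)) := ⟨_, rfl⟩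
  rw [← hτdef, ← hNcdef, ← hAcdef, ← hXdef, ← hYdef, ← hGdef]
  have hτ : 0 < τ := hτdef ▸ sg_pos _ _ ht
  obtain ⟨l, hldef⟩ : ∃ x, x = s / τ := ⟨_, rfl⟩
  rw [← hldef]
  have hl0 : 0 < l := by rw [hldef]; positivity
  have hsl : s = l * τ := by rw [hldef, div_mul_cancel₀ s (ne_of_gt hτ)]
  have compν : sg (ν₁*β₁) (ν₂*β₂) τ = Nc := by
    rw [hτdef, hNcdef]; exact sg_comp hβ₁0 hβ₂0 ν₁ ν₂ ht
  have compα : sg α₁ α₂ τ = Ac := by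
    rw [hτdef, hAcdef]
    have h := sg_comp hβ₁0 hβ₂0 (α₁/β₁) (α₂/β₂) ht
    rwa [div_mul_cancel₀ _ (ne_of_gt hβ₁0), div_mul_cancel₀ _ (ne_of_gt hβ₂0)] at h
  have hNc : 0 < Nc := hNcdef ▸ sg_pos _ _ ht
  have hAc : 0 < Ac := hAcdef ▸ sg_pos _ _ ht
  have hXpos : 0 < X := hXdef ▸ sg_pos _ _ hs
  have hYpos : 0 < Y := hYdef ▸ sg_pos _ _ hs
  have hGpos : 0 < G := hGdef ▸ sg_pos _ _ (by positivity)
  have hτs : τ / s = l⁻¹ := by rw [hldef, inv_div]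
  have hcoren : (0:ℝ) ≤ Ac * Nc ^ p :=
    mul_nonneg hAc.le (Real.rpow_nonneg hNc.le p)
  have hminn : (0:ℝ) ≤ min (l ^ min α₁ α₂) ((τ / s) ^ min α₁ α₂) :=
    le_min (Real.rpow_nonneg hl0.le _) (Real.rpow_nonneg (by positivity) _)
  rcases le_or_gt l 1 with hl1 | hl1
  · -- small scale
    have hE : Real.exp (-(C * (t * G))) ≤ 1 := by
      rw [Real.exp_le_one_iff]
      nlinarith [mul_pos hC (mul_pos ht hGpos)]
    have hX : X ≤ l ^ min (ν₁*β₁) (ν₂*β₂) * Nc := by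
      rw [hXdef, hsl, ← compν]; exact sg_smul_le_min hl0 hl1 hτ
    have hXp : X ^ p ≤ l ^ (min (ν₁*β₁) (ν₂*β₂) * p) * Nc ^ p := by
      calc X ^ p ≤ (l ^ min (ν₁*β₁) (ν₂*β₂) * Nc) ^ p :=
            Real.rpow_le_rpow hXpos.le hX hp0
        _ = l ^ (min (ν₁*β₁) (ν₂*β₂) * p) * Nc ^ p := by
            rw [Real.mul_rpow (Real.rpow_nonneg hl0.le _) hNc.le, ← Real.rpow_mul hl0.le]
    have hY : Y ≤ l ^ min α₁ α₂ * Ac := by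
      rw [hYdef, hsl, ← compα]; exact sg_smul_le_min hl0 hl1 hτ
    have hmin : min (l ^ min α₁ α₂) ((τ / s) ^ min α₁ α₂) = l ^ min α₁ α₂ := by
      apply min_eq_left
      rw [hτs]
      have hinv : l ≤ l⁻¹ := le_trans hl1 (one_le_inv_iff₀.mpr ⟨hl0, hl1⟩)
      exact Real.rpow_le_rpow hl0.le hinv hε.le
    calc Real.exp (-(C * (t * G))) * X ^ p * Y
        ≤ 1 * (l ^ (min (ν₁*β₁) (ν₂*β₂) * p) * Nc ^ p) * (l ^ min α₁ α₂ * Ac) := by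
          apply mul_le_mul _ hY hYpos.le
          · exact mul_nonneg (by norm_num)
              (mul_nonneg (Real.rpow_nonneg hl0.le _) (Real.rpow_nonneg hNc.le p))
          · exact mul_le_mul hE hXp (Real.rpow_nonneg hXpos.le p) (by norm_num)
      _ = l ^ (min (ν₁*β₁) (ν₂*β₂) * p + min α₁ α₂) * (Ac * Nc ^ p) := by
          rw [Real.rpow_add hl0]; ring
      _ ≤ l ^ min α₁ α₂ * (Ac * Nc ^ p) := by
          apply mul_le_mul_of_nonneg_right _ hcoren
          apply Real.rpow_le_rpow_of_exponent_ge hl0 hl1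
          nlinarith [hm, hp0]
      _ = min (l ^ min α₁ α₂) ((τ / s) ^ min α₁ α₂) * (Ac * Nc ^ p) := by rw [hmin]
      _ ≤ max K₀ 1 * (min (l ^ min α₁ α₂) ((τ / s) ^ min α₁ α₂) * (Ac * Nc ^ p)) :=
          le_mul_of_one_le_left (mul_nonneg hminn hcoren) (le_max_right _ _)
  · -- large scale
    have hl : (1:ℝ) ≤ l := hl1.le
    have hcrit := crit_low hβ₁ hβ₂ ht hl (t := t) (l := l)
    have hE : Real.exp (-(C * (t * G))) ≤
        K₀ * l ^ (-(max (ν₁*β₁) (ν₂*β₂) * p + max α₁ α₂ + min α₁ α₂)) := by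
      refine le_trans ?_ (hKb l hl)
      apply Real.exp_le_exp.mpr
      rw [neg_le_neg_iff]
      calc C * (2:ℝ) ^ (-(β₁/(β₁-1) + β₂/(β₂-1))) * l ^ min (β₁/(β₁-1)) (β₂/(β₂-1))
          = C * ((2:ℝ) ^ (-(β₁/(β₁-1) + β₂/(β₂-1))) * l ^ min (β₁/(β₁-1)) (β₂/(β₂-1))) := by
            ring
        _ ≤ C * (t * sg (β₂/(β₂-1)) (β₁/(β₁-1)) (l * sg (1/β₁) (1/β₂) t / (2*t))) :=
            mul_le_mul_of_nonneg_left hcrit hC.le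
        _ = C * (t * G) := by rw [hGdef, ← hτdef, ← hsl]
    have hX : X ≤ l ^ max (ν₁*β₁) (ν₂*β₂) * Nc := by
      rw [hXdef, hsl, ← compν]; exact sg_smul_le_max hl hτ
    have hXp : X ^ p ≤ l ^ (max (ν₁*β₁) (ν₂*β₂) * p) * Nc ^ p := by
      calc X ^ p ≤ (l ^ max (ν₁*β₁) (ν₂*β₂) * Nc) ^ p :=
            Real.rpow_le_rpow hXpos.le hX hp0
        _ = l ^ (max (ν₁*β₁) (ν₂*β₂) * p) * Nc ^ p := by
            rw [Real.mul_rpow (Real.rpow_nonneg hl0.le _) hNc.le, ← Real.rpow_mul hl0.le]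
    have hY : Y ≤ l ^ max α₁ α₂ * Ac := by
      rw [hYdef, hsl, ← compα]; exact sg_smul_le_max hl hτ
    have hmin : min (l ^ min α₁ α₂) ((τ / s) ^ min α₁ α₂) = l ^ (-min α₁ α₂) := by
      rw [hτs, Real.inv_rpow hl0.le, ← Real.rpow_neg hl0.le]
      apply min_eq_right
      rw [Real.rpow_neg hl0.le]
      have h1 : (1:ℝ) ≤ l ^ min α₁ α₂ := Real.one_le_rpow hl hε.le
      have h2 : 0 < l ^ min α₁ α₂ := Real.rpow_pos_of_pos hl0 _
      calc (l ^ min α₁ α₂)⁻¹ ≤ 1 := by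
            rw [inv_le_one_iff₀]; right; exact h1
        _ ≤ l ^ min α₁ α₂ := h1
    calc Real.exp (-(C * (t * G))) * X ^ p * Y
        ≤ (K₀ * l ^ (-(max (ν₁*β₁) (ν₂*β₂) * p + max α₁ α₂ + min α₁ α₂))) *
            (l ^ (max (ν₁*β₁) (ν₂*β₂) * p) * Nc ^ p) * (l ^ max α₁ α₂ * Ac) := by
          apply mul_le_mul _ hY hYpos.le
          · exact mul_nonneg (mul_nonneg hK₀.le (Real.rpow_nonneg hl0.le _))
              (mul_nonneg (Real.rpow_nonneg hl0.le _) (Real.rpow_nonneg hNc.le p))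
          · exact mul_le_mul hE hXp (Real.rpow_nonneg hXpos.le p)
              (mul_nonneg hK₀.le (Real.rpow_nonneg hl0.le _))
      _ = K₀ * (l ^ (-(max (ν₁*β₁) (ν₂*β₂) * p + max α₁ α₂ + min α₁ α₂)) *
            l ^ (max (ν₁*β₁) (ν₂*β₂) * p) * l ^ max α₁ α₂) * (Ac * Nc ^ p) := by ring
      _ = K₀ * l ^ (-min α₁ α₂) * (Ac * Nc ^ p) := by
          rw [← Real.rpow_add hl0, ← Real.rpow_add hl0]
          congr 2
          ring
      _ = K₀ * (min (l ^ min α₁ α₂) ((τ / s) ^ min α₁ α₂) * (Ac * Nc ^ p)) := by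
          rw [hmin]; ring
      _ ≤ max K₀ 1 * (min (l ^ min α₁ α₂) ((τ / s) ^ min α₁ α₂) * (Ac * Nc ^ p)) :=
          mul_le_mul_of_nonneg_right (le_max_left _ _) (mul_nonneg hminn hcoren)

/- The sum over `k ≥ 1` is re-indexed as a sum over `j = k - 1 ∈ ℕ`, so that
`2^{-k} r = 2^{-(j+1)} r` and `2^{1-k} r = 2^{-j} r`. -/
theorem stmt18 (C α₁ α₂ β₁ β₂ ν₁ ν₂ p : ℝ) (hC : 0 < C) (hα₁ : 0 < α₁) (hα₂ : 0 < α₂)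
    (hβ₁ : 1 < β₁) (hβ₂ : 1 < β₂) (hν₁ : 0 < ν₁) (hν₂ : 0 < ν₂) (hp : 1 ≤ p) :
    ∃ c : ℝ, 0 < c ∧ ∀ r > (0:ℝ), ∀ t > (0:ℝ),
      (∑' j : ℕ,
        ENNReal.ofReal
          (Real.exp (-(C * (t * sg (β₂ / (β₂ - 1)) (β₁ / (β₁ - 1))
              ((2:ℝ) ^ (-(j:ℤ) - 1) * r / t)))) *
            (sg (ν₁ * β₁) (ν₂ * β₂) ((2:ℝ) ^ (-(j:ℤ)) * r)) ^ p *
            sg α₁ α₂ ((2:ℝ) ^ (-(j:ℤ)) * r)))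
      ≤ ENNReal.ofReal (c * sg (α₁ / β₁) (α₂ / β₂) t * (sg ν₁ ν₂ t) ^ p) := by
  have hε : 0 < min α₁ α₂ := lt_min hα₁ hα₂
  obtain ⟨K, hK0, hK⟩ := pointwise C α₁ α₂ β₁ β₂ ν₁ ν₂ p hC hα₁ hα₂ hβ₁ hβ₂ hν₁ hν₂ hp
  set q : ℝ := (2⁻¹ : ℝ) ^ min α₁ α₂ with hqdef
  have hq0 : 0 < q := Real.rpow_pos_of_pos (by norm_num) _
  have hq1 : q < 1 := Real.rpow_lt_one (by norm_num) (by norm_num) hε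
  refine ⟨K * (2 / (1 - q)), mul_pos hK0 (div_pos two_pos (by linarith)), fun r hr t ht => ?_⟩
  obtain ⟨τ, hτdef⟩ : ∃ x, x = sg (1/β₁) (1/β₂) t := ⟨_, rfl⟩
  have hτ : 0 < τ := hτdef ▸ sg_pos _ _ ht
  obtain ⟨Nc, hNcdef⟩ : ∃ x, x = sg ν₁ ν₂ t := ⟨_, rfl⟩
  obtain ⟨Ac, hAcdef⟩ : ∃ x, x = sg (α₁/β₁) (α₂/β₂) t := ⟨_, rfl⟩
  have hNc : 0 < Nc := hNcdef ▸ sg_pos _ _ ht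
  have hAc : 0 < Ac := hAcdef ▸ sg_pos _ _ ht
  have hb : 0 < (r/τ) ^ min α₁ α₂ := Real.rpow_pos_of_pos (by positivity) _
  have hcoren : (0:ℝ) ≤ Ac * Nc ^ p := mul_nonneg hAc.le (Real.rpow_nonneg hNc.le p)
  -- per-term bound
  have hterm : ∀ j : ℕ,
      Real.exp (-(C * (t * sg (β₂ / (β₂ - 1)) (β₁ / (β₁ - 1))
          ((2:ℝ) ^ (-(j:ℤ) - 1) * r / t)))) *
        (sg (ν₁ * β₁) (ν₂ * β₂) ((2:ℝ) ^ (-(j:ℤ)) * r)) ^ p *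
        sg α₁ α₂ ((2:ℝ) ^ (-(j:ℤ)) * r)
      ≤ (K * (Ac * Nc ^ p)) *
          min (q ^ j * (r/τ) ^ min α₁ α₂) ((q ^ j * (r/τ) ^ min α₁ α₂)⁻¹) := by
    intro j
    have h2j : (0:ℝ) < (2:ℝ) ^ (-(j:ℤ)) := by positivity
    have hsj : (0:ℝ) < (2:ℝ) ^ (-(j:ℤ)) * r := by positivity
    have harg : (2:ℝ) ^ (-(j:ℤ) - 1) * r / t = ((2:ℝ) ^ (-(j:ℤ)) * r) / (2 * t) := by
      rw [zpow_sub₀ (two_ne_zero), zpow_one]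
      ring
    have hpow : (2:ℝ) ^ (-(j:ℤ)) = (2⁻¹:ℝ) ^ j := by
      rw [zpow_neg, ← inv_zpow, zpow_natCast]
    have hspl : ((2:ℝ) ^ (-(j:ℤ)) * r) / τ = (2⁻¹:ℝ) ^ j * (r/τ) := by
      rw [hpow]; ring
    have hrpowpow : ((2⁻¹:ℝ) ^ j) ^ (min α₁ α₂) = q ^ j := by
      rw [← Real.rpow_natCast (2⁻¹:ℝ) j, ← Real.rpow_mul (by norm_num), mul_comm,
        Real.rpow_mul (by norm_num), Real.rpow_natCast, hqdef]
    have hmin1 : (((2:ℝ) ^ (-(j:ℤ)) * r) / τ) ^ min α₁ α₂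
        = q ^ j * (r/τ) ^ min α₁ α₂ := by
      rw [hspl, Real.mul_rpow (by positivity) (by positivity), hrpowpow]
    have hmin2 : (τ / ((2:ℝ) ^ (-(j:ℤ)) * r)) ^ min α₁ α₂
        = (q ^ j * (r/τ) ^ min α₁ α₂)⁻¹ := by
      rw [← hmin1, ← Real.inv_rpow (by positivity), inv_div]
    have := hK t ht ((2:ℝ) ^ (-(j:ℤ)) * r) hsj
    rw [← harg, ← hτdef, ← hNcdef, ← hAcdef, hmin1, hmin2] at this
    calc Real.exp (-(C * (t * sg (β₂ / (β₂ - 1)) (β₁ / (β₁ - 1))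
          ((2:ℝ) ^ (-(j:ℤ) - 1) * r / t)))) *
        (sg (ν₁ * β₁) (ν₂ * β₂) ((2:ℝ) ^ (-(j:ℤ)) * r)) ^ p *
        sg α₁ α₂ ((2:ℝ) ^ (-(j:ℤ)) * r)
        ≤ K * (min (q ^ j * (r/τ) ^ min α₁ α₂) ((q ^ j * (r/τ) ^ min α₁ α₂)⁻¹) *
            (Ac * Nc ^ p)) := this
      _ = (K * (Ac * Nc ^ p)) *
          min (q ^ j * (r/τ) ^ min α₁ α₂) ((q ^ j * (r/τ) ^ min α₁ α₂)⁻¹) := by ring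
  calc (∑' j : ℕ, ENNReal.ofReal
        (Real.exp (-(C * (t * sg (β₂ / (β₂ - 1)) (β₁ / (β₁ - 1))
            ((2:ℝ) ^ (-(j:ℤ) - 1) * r / t)))) *
          (sg (ν₁ * β₁) (ν₂ * β₂) ((2:ℝ) ^ (-(j:ℤ)) * r)) ^ p *
          sg α₁ α₂ ((2:ℝ) ^ (-(j:ℤ)) * r)))
      ≤ ∑' j : ℕ, ENNReal.ofReal ((K * (Ac * Nc ^ p)) *
          min (q ^ j * (r/τ) ^ min α₁ α₂) ((q ^ j * (r/τ) ^ min α₁ α₂)⁻¹)) :=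
        ENNReal.tsum_le_tsum (fun j => ENNReal.ofReal_le_ofReal (hterm j))
    _ = ENNReal.ofReal (K * (Ac * Nc ^ p)) * ∑' j : ℕ, ENNReal.ofReal
          (min (q ^ j * (r/τ) ^ min α₁ α₂) ((q ^ j * (r/τ) ^ min α₁ α₂)⁻¹)) := by
        rw [← ENNReal.tsum_mul_left]
        apply tsum_congr
        intro j
        rw [← ENNReal.ofReal_mul (by positivity)]
    _ ≤ ENNReal.ofReal (K * (Ac * Nc ^ p)) * ENNReal.ofReal (2 / (1 - q)) :=
        mul_le_mul_right (geom_min_sum hq0 hq1 hb) _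
    _ = ENNReal.ofReal ((K * (Ac * Nc ^ p)) * (2 / (1 - q))) := by
        rw [← ENNReal.ofReal_mul (by positivity)]
    _ = ENNReal.ofReal (K * (2 / (1 - q)) * Ac * Nc ^ p) := by
        congr 1
        ring
    _ = ENNReal.ofReal (K * (2 / (1 - q)) * sg (α₁ / β₁) (α₂ / β₂) t *
          (sg ν₁ ν₂ t) ^ p) := by rw [← hNcdef, ← hAcdef]
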